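/- Let V, A_1,…,A_m, c, n, H, Ric, Θ_p be as in the setting, with n ≥ 4. Assume Ric(X) ≥ (n−2)(c+H²) for every unit vector X ∈ V, and that for some integer p with 2 ≤ p ≤ n/2 and some orthonormal basis e_1,…,e_n of V equality Θ_p = p(n−p)c holds. Then Ric(X) = (n−2)(c+H²) for every unit vector X ∈ V. (First conclusion of Proposition 2, part (ii).) -/

import Mathlib

/-!
Write `a^α_{ij} = ⟨A_α e_i, e_j⟩` and `t_α = Σ_{i≤p} a^α_{ii}`. Summing the pinching
`Ric(e_i) ≥ (n-2)(c+H²)` over `i ≤ p` and inserting `Θ_p = p(n-p)c`, the Cauchy–Schwarz bounds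
`t_α² ≤ p Σ_{i,j≤p} (a^α_{ij})²`, `(tr A_α - t_α)² ≤ (n-p) Σ_{i,j>p} (a^α_{ij})²` and
`Σ_α (n t_α - p tr A_α)² ≥ 0` combine, with coefficients that are nonnegative for
`2 ≤ p ≤ n/2`, to `S ≥ nc + 2nH²`. For any orthonormal basis the Ricci curvatures sum to
`n(n-1)c + n²H² - S ≤ n(n-2)(c+H²)`; extending a unit vector `X` to such a basis, the pinching
at the other basis vectors forces `Ric(X) = (n-2)(c+H²)`.
-/

open scoped RealInnerProductSpace

/-- The Ricci curvature at a point of a submanifold, expressed through the shape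
operators `A_α` via the Gauss equation: for a unit vector `X`,
`Ric X = (n-1)c + Σ_α tr(A_α)⟨A_α X, X⟩ − Σ_α ‖A_α X‖²`. -/
noncomputable def RicCurv {V : Type*} [NormedAddCommGroup V] [InnerProductSpace ℝ V]
    (m n : ℕ) (c : ℝ) (A : Fin m → V →ₗ[ℝ] V) (X : V) : ℝ :=
  ((n : ℝ) - 1) * c + (∑ α : Fin m, LinearMap.trace ℝ V (A α) * ⟪(A α) X, X⟫)
    - ∑ α : Fin m, ‖(A α) X‖ ^ 2

/-- The Lawson–Simons quantity `Θ_p` associated to an orthonormal basis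
`e_1, …, e_n` and an integer `p`:
`Θ_p = Σ_{i≤p} Σ_{j>p} (2 Σ_α ⟨A_α e_i, e_j⟩² − Σ_α ⟨A_α e_i, e_i⟩⟨A_α e_j, e_j⟩)`. -/
noncomputable def Theta {V : Type*} [NormedAddCommGroup V] [InnerProductSpace ℝ V]
    (m : ℕ) {n : ℕ} (p : ℕ) (A : Fin m → V →ₗ[ℝ] V)
    (e : OrthonormalBasis (Fin n) ℝ V) : ℝ :=
  ∑ i ∈ Finset.univ.filter (fun i : Fin n => (i : ℕ) < p),
    ∑ j ∈ Finset.univ.filter (fun j : Fin n => p ≤ (j : ℕ)),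
      (2 * ∑ α : Fin m, ⟪(A α) (e i), e j⟫ ^ 2
        - ∑ α : Fin m, ⟪(A α) (e i), e i⟫ * ⟪(A α) (e j), e j⟫)

/-- The quantity `T_p = Σ_α (tr A_α) Σ_{i≤p} ⟨A_α e_i, e_i⟩`. -/
noncomputable def Tsum {V : Type*} [NormedAddCommGroup V] [InnerProductSpace ℝ V]
    (m : ℕ) {n : ℕ} (p : ℕ) (A : Fin m → V →ₗ[ℝ] V)
    (e : OrthonormalBasis (Fin n) ℝ V) : ℝ :=
  ∑ α : Fin m, LinearMap.trace ℝ V (A α) *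
    ∑ i ∈ Finset.univ.filter (fun i : Fin n => (i : ℕ) < p), ⟪(A α) (e i), e i⟫

/-- The squared length `S = Σ_α tr(A_α²)` of the second fundamental form. -/
noncomputable def Ssec {V : Type*} [NormedAddCommGroup V] [InnerProductSpace ℝ V]
    (m : ℕ) (A : Fin m → V →ₗ[ℝ] V) : ℝ :=
  ∑ α : Fin m, LinearMap.trace ℝ V (A α ∘ₗ A α)

open Finset

/-- The estimate in scalar form: `h = H²`, `τ = Σ_α t_α²`, `μ = T_p = Σ_α (tr A_α) t_α`, and
`C`, `D`, `B` are the sums over `α` of the squared entries of the `(≤p, ≤p)`, `(>p, >p)` and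
`(≤p, >p)` blocks of `A_α`. -/
lemma pinching_inequality {n p c h τ μ C D B : ℝ} (hp : 2 ≤ p) (hpn : 2 * p ≤ n)
    (hC : τ ≤ p * C) (hD : n ^ 2 * h - 2 * μ + τ ≤ (n - p) * D)
    (hmix : 2 * n * p * μ ≤ n ^ 2 * τ + p ^ 2 * (n ^ 2 * h)) (hB : 0 ≤ B)
    (hR : p * ((n - 2) * (c + h)) ≤ p * ((n - 1) * c) + μ - (C + B))
    (hΘ : 2 * B - (μ - τ) = p * (n - p) * c) :
    n * c + 2 * n * h ≤ C + D + 2 * B := by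
  set E := (n - p) * (n - 2) - (n - 2 * p)
  have hE : 0 < E := by nlinarith
  have hW : 0 ≤ 2 * p * E + n * (n - 2 * p) - 2 * n * (n - 2) := by
    nlinarith [mul_nonneg (by linarith : (0:ℝ) ≤ p - 2) (by linarith : (0:ℝ) ≤ n - p - 2),
      sq_nonneg (n - 2 * p)]
  have hK : 0 < n * p ^ 2 * (n - p) * E :=
    mul_pos (mul_pos (mul_pos (by linarith) (by positivity)) (by linarith)) hE
  -- the certificate, cleared of denominators
  have key : n * p ^ 2 * (n - p) * E * (C + D + 2 * B - (n * c + 2 * n * h))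
      = n ^ 2 * p * (n - p) * (n - 2 * p)
          * (p * ((n - 1) * c) + μ - (C + B) - p * ((n - 2) * (c + h)))
        + n * (n - p) * (p * E + n * (n - 2 * p)) * (p * C - τ)
        + n * p ^ 2 * E * ((n - p) * D - (n ^ 2 * h - 2 * μ + τ))
        + n * p * (n - p) * (2 * p * E + n * (n - 2 * p) - 2 * n * (n - 2)) * B
        + (n - 2 * p) ^ 2 * (n ^ 2 * τ + p ^ 2 * (n ^ 2 * h) - 2 * n * p * μ)
        + n ^ 2 * (n - 2) * p * (n - p) * (2 * B - (μ - τ) - p * (n - p) * c) := by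
    ring
  have h0 : 0 ≤ n - 2 * p := by linarith
  have h1 : 0 ≤ n - p := by linarith
  have hn : 0 ≤ n := by linarith
  have hp0 : 0 ≤ p := by linarith
  have hPE : 0 ≤ p * E + n * (n - 2 * p) := by nlinarith
  have hpos : 0 ≤ n * p ^ 2 * (n - p) * E * (C + D + 2 * B - (n * c + 2 * n * h)) := by
    rw [key, hΘ, sub_self, mul_zero, add_zero]
    linarith [mul_nonneg (mul_nonneg (mul_nonneg (mul_nonneg (sq_nonneg n) hp0) h1) h0)
        (sub_nonneg.2 hR),
      mul_nonneg (mul_nonneg (mul_nonneg hn h1) hPE) (sub_nonneg.2 hC),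
      mul_nonneg (mul_nonneg (mul_nonneg hn (sq_nonneg p)) hE.le) (sub_nonneg.2 hD),
      mul_nonneg (mul_nonneg (mul_nonneg (mul_nonneg hn hp0) h1) hW) hB,
      mul_nonneg (sq_nonneg (n - 2 * p)) (sub_nonneg.2 hmix)]
  exact sub_nonneg.1 ((mul_nonneg_iff_of_pos_left hK).1 hpos)

section Blocks

variable {V ι : Type*} [NormedAddCommGroup V] [InnerProductSpace ℝ V] [Fintype ι]
  (e : OrthonormalBasis ι ℝ V) (T : V →ₗ[ℝ] V)

noncomputable def blockNormSq (s u : Finset ι) : ℝ :=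
  ∑ i ∈ s, ∑ j ∈ u, ⟪T (e i), e j⟫ ^ 2

lemma blockNormSq_nonneg (s u : Finset ι) : 0 ≤ blockNormSq e T s u :=
  sum_nonneg fun _ _ => sum_nonneg fun _ _ => sq_nonneg _

lemma blockNormSq_univ_right (s : Finset ι) :
    blockNormSq e T s univ = ∑ i ∈ s, ‖T (e i)‖ ^ 2 :=
  sum_congr rfl fun i _ => e.sum_sq_inner_left (T (e i))

lemma trace_comp_self_eq_blockNormSq {T : V →ₗ[ℝ] V} (hT : T.IsSymmetric) :
    LinearMap.trace ℝ V (T ∘ₗ T) = blockNormSq e T univ univ := by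
  rw [LinearMap.trace_eq_sum_inner _ e, blockNormSq_univ_right]
  refine sum_congr rfl fun i _ => ?_
  rw [LinearMap.comp_apply, ← hT, real_inner_self_eq_norm_sq]

lemma sq_sum_inner_le_card_mul_blockNormSq (s : Finset ι) :
    (∑ i ∈ s, ⟪T (e i), e i⟫) ^ 2 ≤ #s * blockNormSq e T s s :=
  calc _ ≤ #s * ∑ i ∈ s, ⟪T (e i), e i⟫ ^ 2 := sq_sum_le_card_mul_sum_sq
    _ ≤ _ := mul_le_mul_of_nonneg_left (sum_le_sum fun i hi =>
        single_le_sum (f := fun j => ⟪T (e i), e j⟫ ^ 2) (fun _ _ => sq_nonneg _) hi)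
      (Nat.cast_nonneg _)

lemma blockNormSq_comm {T : V →ₗ[ℝ] V} (hT : T.IsSymmetric) (s u : Finset ι) :
    blockNormSq e T s u = blockNormSq e T u s := by
  rw [blockNormSq, sum_comm]
  refine sum_congr rfl fun j _ => sum_congr rfl fun i _ => ?_
  rw [hT, real_inner_comm]

variable [DecidableEq ι]

lemma blockNormSq_add_compl_right (s u : Finset ι) :
    blockNormSq e T s u + blockNormSq e T s uᶜ = blockNormSq e T s univ := by
  simp only [blockNormSq, ← sum_add_distrib, sum_add_sum_compl]

lemma blockNormSq_add_compl_left (s u : Finset ι) :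
    blockNormSq e T s u + blockNormSq e T sᶜ u = blockNormSq e T univ u :=
  sum_add_sum_compl s _

lemma trace_comp_self_eq_blocks {T : V →ₗ[ℝ] V} (hT : T.IsSymmetric) (s : Finset ι) :
    LinearMap.trace ℝ V (T ∘ₗ T) =
      blockNormSq e T s s + blockNormSq e T sᶜ sᶜ + 2 * blockNormSq e T s sᶜ := by
  rw [trace_comp_self_eq_blockNormSq e hT, ← blockNormSq_add_compl_left e T s,
    ← blockNormSq_add_compl_right e T s s, ← blockNormSq_add_compl_right e T sᶜ s,
    blockNormSq_comm e hT sᶜ s]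
  ring

lemma trace_sub_sum_inner_eq (s : Finset ι) :
    LinearMap.trace ℝ V T - ∑ i ∈ s, ⟪T (e i), e i⟫ = ∑ i ∈ sᶜ, ⟪T (e i), e i⟫ := by
  rw [LinearMap.trace_eq_sum_inner _ e, ← sum_add_sum_compl s]
  simp only [real_inner_comm (e _)]
  ring

end Blocks

section Ricci

variable {V : Type*} [NormedAddCommGroup V] [InnerProductSpace ℝ V] {m n : ℕ}
  (c : ℝ) (A : Fin m → V →ₗ[ℝ] V)

lemma sum_ricCurv_eq {ι : Type*} [Fintype ι] (e : OrthonormalBasis ι ℝ V) (s : Finset ι) :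
    ∑ i ∈ s, RicCurv m n c A (e i) = #s * ((n - 1) * c)
      + ∑ α, LinearMap.trace ℝ V (A α) * ∑ i ∈ s, ⟪A α (e i), e i⟫
      - ∑ α, blockNormSq e (A α) s univ := by
  simp only [RicCurv, sum_add_distrib, sum_sub_distrib, sum_const, nsmul_eq_mul, mul_sum,
    blockNormSq_univ_right]
  rw [sum_comm (s := s), sum_comm (s := s)]

lemma sum_ricCurv_eq_sub_ssec {ι : Type*} [Fintype ι] (e : OrthonormalBasis ι ℝ V)
    (hA : ∀ α, (A α).IsSymmetric) :
    ∑ i, RicCurv m n c A (e i) = Fintype.card ι * ((n - 1) * c)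
      + ∑ α, LinearMap.trace ℝ V (A α) ^ 2 - Ssec m A := by
  simp only [sum_ricCurv_eq, card_univ, Ssec, trace_comp_self_eq_blockNormSq e (hA _), sq,
    LinearMap.trace_eq_sum_inner _ e, real_inner_comm (e _)]

lemma ricCurv_eq_of_le_ssec (e : OrthonormalBasis (Fin n) ℝ V) (hA : ∀ α, (A α).IsSymmetric)
    {H : ℝ} (hH : (n : ℝ) ^ 2 * H ^ 2 = ∑ α, LinearMap.trace ℝ V (A α) ^ 2)
    (hRic : ∀ X : V, ‖X‖ = 1 → ((n : ℝ) - 2) * (c + H ^ 2) ≤ RicCurv m n c A X)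
    (hS : n * c + 2 * n * H ^ 2 ≤ Ssec m A) {X : V} (hX : ‖X‖ = 1) :
    RicCurv m n c A X = ((n : ℝ) - 2) * (c + H ^ 2) := by
  have : FiniteDimensional ℝ V := e.toBasis.finiteDimensional_of_finite
  have hcard : Module.finrank ℝ V = Fintype.card (Fin n) :=
    Module.finrank_eq_card_basis e.toBasis
  have : Nontrivial V := ⟨X, 0, by rintro rfl; simp at hX⟩
  obtain ⟨i₀⟩ : Nonempty (Fin n) := by
    rw [← Fintype.card_pos_iff, ← hcard]; exact Module.finrank_pos
  have hXon : Orthonormal ℝ (({i₀} : Set (Fin n)).domRestrict fun _ => X) :=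
    orthonormal_subsingleton_iff.2 fun _ => hX
  obtain ⟨f, hf⟩ := hXon.exists_orthonormalBasis_extension_of_card_eq hcard
  refine le_antisymm ?_ (hRic X hX)
  by_contra! hlt
  have := sum_lt_sum (fun i _ => hRic (f i) (f.orthonormal.1 i))
    ⟨i₀, mem_univ _, (hf i₀ rfl).symm ▸ hlt⟩
  rw [sum_const, card_univ, nsmul_eq_mul, sum_ricCurv_eq_sub_ssec c A f hA,
    Fintype.card_fin] at this
  linarith

end Ricci

/-- The indices of `e_1, …, e_p`: `Fin n` counts from `0`. -/
def firstBlock (n p : ℕ) : Finset (Fin n) := univ.filter fun i => (i : ℕ) < p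

lemma card_firstBlock {n p : ℕ} (hp : p ≤ n) : #(firstBlock n p) = p := by
  rw [firstBlock, Fin.card_filter_val_lt, min_eq_right hp]

lemma compl_firstBlock (n p : ℕ) :
    (firstBlock n p)ᶜ = univ.filter fun i : Fin n => p ≤ (i : ℕ) := by
  ext i; simp [firstBlock]

lemma theta_eq_sum_blockNormSq {V : Type*} [NormedAddCommGroup V] [InnerProductSpace ℝ V]
    {m n : ℕ} (A : Fin m → V →ₗ[ℝ] V) (e : OrthonormalBasis (Fin n) ℝ V) (p : ℕ) :
    Theta m p A e =
    ∑ α, (2 * blockNormSq e (A α) (firstBlock n p) (firstBlock n p)ᶜ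
      - (∑ i ∈ firstBlock n p, ⟪A α (e i), e i⟫)
        * (LinearMap.trace ℝ V (A α) - ∑ i ∈ firstBlock n p, ⟪A α (e i), e i⟫)) := by
  rw [Theta, ← compl_firstBlock]
  simp only [trace_sub_sum_inner_eq, sum_mul_sum]
  simp only [blockNormSq, mul_sum, ← sum_sub_distrib]
  exact (sum_congr rfl fun _ _ => sum_comm).trans sum_comm

theorem le_ssec_of_theta_eq {V : Type*} [NormedAddCommGroup V] [InnerProductSpace ℝ V]
    {m n : ℕ} (A : Fin m → V →ₗ[ℝ] V) (hA : ∀ α, (A α).IsSymmetric) (e : OrthonormalBasis (Fin n) ℝ V)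
    {c H : ℝ} (hH : (n : ℝ) ^ 2 * H ^ 2 = ∑ α, LinearMap.trace ℝ V (A α) ^ 2)
    {p : ℕ} (hp : 2 ≤ p) (hpn : 2 * p ≤ n)
    (hRic : ∀ i ∈ firstBlock n p, ((n : ℝ) - 2) * (c + H ^ 2) ≤ RicCurv m n c A (e i))
    (hΘ : Theta m p A e = p * ((n : ℝ) - p) * c) :
    n * c + 2 * n * H ^ 2 ≤ Ssec m A := by
  set P := firstBlock n p
  set t : Fin m → ℝ := fun α => ∑ i ∈ P, ⟪A α (e i), e i⟫
  have hμ : Tsum m p A e = ∑ α, LinearMap.trace ℝ V (A α) * t α := rfl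
  have hP : (#P : ℝ) = p := by rw [card_firstBlock (by omega)]
  have hPc : (#Pᶜ : ℝ) = n - p := by
    rw [card_compl, Fintype.card_fin, card_firstBlock (by omega), Nat.cast_sub (by omega)]
  have hS : Ssec m A = ∑ α, blockNormSq e (A α) P P + ∑ α, blockNormSq e (A α) Pᶜ Pᶜ
      + 2 * ∑ α, blockNormSq e (A α) P Pᶜ := by
    simp only [Ssec, trace_comp_self_eq_blocks e (hA _) P, sum_add_distrib, mul_sum]
  rw [hS]
  refine pinching_inequality (n := n) (p := p) (τ := ∑ α, t α ^ 2) (μ := Tsum m p A e)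
    (by exact_mod_cast hp) (by exact_mod_cast hpn) ?_ ?_ ?_
    (sum_nonneg fun α _ => blockNormSq_nonneg _ _ _ _) ?_ ?_
  · rw [mul_sum]
    exact sum_le_sum fun α _ => hP ▸ sq_sum_inner_le_card_mul_blockNormSq e (A α) P
  · calc _ = ∑ α, (LinearMap.trace ℝ V (A α) - t α) ^ 2 := by
          simp only [hH, hμ, sub_sq, sum_add_distrib, sum_sub_distrib, mul_sum, mul_assoc]
      _ ≤ _ := by
        rw [mul_sum]
        refine sum_le_sum fun α _ => ?_
        rw [← hPc, trace_sub_sum_inner_eq]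
        exact sq_sum_inner_le_card_mul_blockNormSq e (A α) Pᶜ
  · rw [hH, hμ, mul_sum, mul_sum, mul_sum, ← sum_add_distrib]
    exact sum_le_sum fun α _ => by
      nlinarith [sq_nonneg (n * t α - p * LinearMap.trace ℝ V (A α))]
  · have := card_nsmul_le_sum P _ _ hRic
    rw [sum_ricCurv_eq, nsmul_eq_mul, hP] at this
    simp only [← blockNormSq_add_compl_right e _ P P, sum_add_distrib] at this
    exact this
  · rw [← hΘ, theta_eq_sum_blockNormSq, hμ, ← sum_sub_distrib, mul_sum, ← sum_sub_distrib]
    exact sum_congr rfl fun α _ => by ring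

theorem ricci_pinched_equality_einstein_general {V : Type*} [NormedAddCommGroup V] [InnerProductSpace ℝ V]
    (n m : ℕ)
    (A : Fin m → V →ₗ[ℝ] V) (hsymm : ∀ α : Fin m, (A α).IsSymmetric)
    (c H : ℝ)
    (hHdef : (n : ℝ) ^ 2 * H ^ 2 = ∑ α : Fin m, (LinearMap.trace ℝ V (A α)) ^ 2)
    (hRic : ∀ X : V, ‖X‖ = 1 → RicCurv m n c A X ≥ ((n : ℝ) - 2) * (c + H ^ 2))
    (p : ℕ) (hp1 : 2 ≤ p) (hp2 : 2 * p ≤ n)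
    (e : OrthonormalBasis (Fin n) ℝ V)
    (heq : Theta m p A e = (p : ℝ) * ((n : ℝ) - p) * c) :
    ∀ X : V, ‖X‖ = 1 → RicCurv m n c A X = ((n : ℝ) - 2) * (c + H ^ 2) := fun _ hX =>
  have hS := le_ssec_of_theta_eq A hsymm e hHdef hp1 hp2
    (fun i _ => hRic (e i) (e.orthonormal.1 i)) heq
  ricCurv_eq_of_le_ssec c A e hsymm hHdef hRic hS hX

theorem ricci_pinched_equality_einstein {V : Type*} [NormedAddCommGroup V] [InnerProductSpace ℝ V]
    [FiniteDimensional ℝ V] (n m : ℕ)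
    (hdim : Module.finrank ℝ V = n)
    (A : Fin m → V →ₗ[ℝ] V) (hsymm : ∀ α : Fin m, (A α).IsSymmetric)
    (c H : ℝ) (hH : 0 ≤ H)
    (hHdef : (n : ℝ) ^ 2 * H ^ 2 = ∑ α : Fin m, (LinearMap.trace ℝ V (A α)) ^ 2)
    (hn : 4 ≤ n)
    (hRic : ∀ X : V, ‖X‖ = 1 → RicCurv m n c A X ≥ ((n : ℝ) - 2) * (c + H ^ 2))
    (p : ℕ) (hp1 : 2 ≤ p) (hp2 : 2 * p ≤ n)
    (e : OrthonormalBasis (Fin n) ℝ V)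
    (heq : Theta m p A e = (p : ℝ) * ((n : ℝ) - p) * c) :
    ∀ X : V, ‖X‖ = 1 → RicCurv m n c A X = ((n : ℝ) - 2) * (c + H ^ 2) :=
  ricci_pinched_equality_einstein_general n m A hsymm c H hHdef hRic p hp1 hp2 e heq
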